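/- Let X be a finite set, F a family of subsets of X, and M a positive integer with M > 2·C(|F|,2). If weights are assigned to elements of X independently and uniformly at random from {1,...,M}, then with probability greater than 1/2 all sets in F have pairwise distinct total weights. In particular M = 2|F|² suffices. -/

import Mathlib

/-!
For two distinct sets pick `x` in their symmetric difference: once the weights off `x` are
fixed, at most one value of `w x` balances the two sums, so the pair collides for at most a
`1/M` fraction of the weightings. A union bound over the `C(|F|,2)` pairs bounds the failure
probability by `C(|F|,2)/M < 1/2`.
-/

open Finset

theorem card_filter_piFinset_mul_card_le {α β : Type*} [Fintype α] [DecidableEq α]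
    {t : α → Finset β} (P : (α → β) → Prop) [DecidablePred P] (x : α)
    (hP : ∀ w w', P w → P w' → (∀ y ≠ x, w y = w' y) → w x = w' x) :
    #((Fintype.piFinset t).filter P) * #(t x) ≤ #(Fintype.piFinset t) := by
  rw [← card_product]
  refine card_le_card_of_injOn (fun p => Function.update p.1 x p.2) ?_ ?_
  · rintro ⟨w, v⟩ hwv
    simp only [coe_product, Set.mem_prod, coe_filter, Fintype.mem_piFinset,
      Set.mem_ofPred_eq, mem_coe] at hwv ⊢
    intro y
    rcases eq_or_ne y x with rfl | hy
    · simpa using hwv.2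
    · simpa [hy] using hwv.1.1 y
  · rintro ⟨w, v⟩ hwv ⟨w', v'⟩ hwv' h
    simp only [coe_product, Set.mem_prod, coe_filter, Fintype.mem_piFinset,
      Set.mem_ofPred_eq, mem_coe] at hwv hwv'
    have hv : v = v' := by simpa using congrFun h x
    have hoff : ∀ y ≠ x, w y = w' y := fun y hy => by
      simpa [hy] using congrFun h y
    have hw : w = w' := funext fun y => by
      rcases eq_or_ne y x with rfl | hy
      · exact hP w w' hwv.1.2 hwv'.1.2 hoff
      · exact hoff y hy
    rw [hw, hv]

theorem apply_eq_of_sum_eq_sum {α β : Type*} [DecidableEq α] [AddCancelCommMonoid β]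
    {S₁ S₂ : Finset α} {x : α} (hx₁ : x ∈ S₁) (hx₂ : x ∉ S₂) {w w' : α → β}
    (hw : ∑ y ∈ S₁, w y = ∑ y ∈ S₂, w y) (hw' : ∑ y ∈ S₁, w' y = ∑ y ∈ S₂, w' y)
    (hoff : ∀ y ≠ x, w y = w' y) : w x = w' x := by
  have hrest : ∑ y ∈ S₁.erase x, w y = ∑ y ∈ S₁.erase x, w' y :=
    sum_congr rfl fun y hy => hoff y (ne_of_mem_erase hy)
  have hS₂ : ∑ y ∈ S₂, w y = ∑ y ∈ S₂, w' y :=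
    sum_congr rfl fun y hy => hoff y (ne_of_mem_of_not_mem hy hx₂)
  rw [← add_sum_erase _ _ hx₁] at hw hw'
  rw [hrest, hS₂, ← hw'] at hw
  exact add_right_cancel hw

theorem card_filter_sum_eq_sum_mul_le {α β : Type*} [Fintype α] [DecidableEq α]
    [DecidableEq β] [AddCancelCommMonoid β] (s : Finset β) {S₁ S₂ : Finset α} (hne : S₁ ≠ S₂) :
    #((Fintype.piFinset fun _ : α => s).filter fun w =>
        ∑ y ∈ S₁, w y = ∑ y ∈ S₂, w y) * #s ≤ #(Fintype.piFinset fun _ : α => s) := by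
  obtain ⟨x, hx₁, hx₂⟩ | ⟨x, hx₂, hx₁⟩ : (∃ x ∈ S₁, x ∉ S₂) ∨ (∃ x ∈ S₂, x ∉ S₁) := by
    by_contra! h
    exact hne (Subset.antisymm h.1 h.2)
  · exact card_filter_piFinset_mul_card_le _ x fun w w' hw hw' =>
      apply_eq_of_sum_eq_sum hx₁ hx₂ hw hw'
  · exact card_filter_piFinset_mul_card_le _ x fun w w' hw hw' =>
      apply_eq_of_sum_eq_sum hx₂ hx₁ hw.symm hw'.symm

theorem card_filter_not_injOn_mul_le {Ω ι γ : Type*} [DecidableEq Ω] [DecidableEq γ]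
    (s : Finset Ω) (F : Finset ι) (f : Ω → ι → γ) [DecidablePred fun w => Set.InjOn (f w) F]
    {M N : ℕ} (h : ∀ i ∈ F, ∀ j ∈ F, i ≠ j → #(s.filter fun w => f w i = f w j) * M ≤ N) :
    #(s.filter fun w => ¬ Set.InjOn (f w) F) * M ≤ F.card.choose 2 * N := by
  classical
  have hcover : s.filter (fun w => ¬ Set.InjOn (f w) F) ⊆
      (F.powersetCard 2).biUnion fun T => s.filter fun w => ¬ Set.InjOn (f w) T := by
    intro w hw
    simp only [mem_filter, Set.InjOn, not_forall] at hw
    obtain ⟨hws, i, hi, j, hj, hfij, hij⟩ := hw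
    refine mem_biUnion.mpr ⟨{i, j}, mem_powersetCard.mpr ⟨?_, card_pair hij⟩, ?_⟩
    · exact insert_subset hi (singleton_subset_iff.mpr hj)
    · simp [hws, hfij, hij]
  have hpair : ∀ T ∈ F.powersetCard 2,
      #(s.filter fun w => ¬ Set.InjOn (f w) T) * M ≤ N := by
    intro T hT
    obtain ⟨hTF, hT2⟩ := mem_powersetCard.mp hT
    obtain ⟨i, j, hij, rfl⟩ := card_eq_two.mp hT2
    have hsub : s.filter (fun w => ¬ Set.InjOn (f w) ({i, j} : Finset ι)) ⊆
        s.filter fun w => f w i = f w j :=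
      monotone_filter_right _ fun w => by simp [hij]
    exact (Nat.mul_le_mul_right M (card_le_card hsub)).trans
      (h i (hTF (by simp)) j (hTF (by simp)) hij)
  calc #(s.filter fun w => ¬ Set.InjOn (f w) F) * M
      ≤ (∑ T ∈ F.powersetCard 2, #(s.filter fun w => ¬ Set.InjOn (f w) T)) * M :=
        Nat.mul_le_mul_right M ((card_le_card hcover).trans card_biUnion_le)
    _ ≤ ∑ _T ∈ F.powersetCard 2, N := by rw [sum_mul]; exact sum_le_sum hpair
    _ = F.card.choose 2 * N := by rw [sum_const, card_powersetCard, smul_eq_mul]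

/-- Quantitative randomized Separation Lemma: if `M > 2·C(|F|,2)`, then with
probability greater than `1/2` (over uniform random weight functions
`α → {1,...,M}`) all sets in `F` have pairwise distinct total weights. -/
theorem randomized_separation_half {α : Type*} [Fintype α] [DecidableEq α]
    (F : Finset (Finset α)) (M : ℕ) (hM : 2 * F.card.choose 2 < M) :
    (1 : ℝ) / 2 <
      (((Fintype.piFinset fun _ : α => Finset.Icc 1 M).filter fun w =>
          ∀ S₁ ∈ F, ∀ S₂ ∈ F, S₁ ≠ S₂ →
            ∑ x ∈ S₁, w x ≠ ∑ x ∈ S₂, w x).card : ℝ) /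
        ((Fintype.piFinset fun _ : α => Finset.Icc 1 M).card : ℝ) := by
  classical
  set Ω := Fintype.piFinset fun _ : α => Finset.Icc 1 M
  set weight : (α → ℕ) → Finset α → ℕ := fun w S => ∑ x ∈ S, w x
  have hgood : (Ω.filter fun w => ∀ S₁ ∈ F, ∀ S₂ ∈ F, S₁ ≠ S₂ →
      ∑ x ∈ S₁, w x ≠ ∑ x ∈ S₂, w x) = Ω.filter fun w => Set.InjOn (weight w) F := by
    refine filter_congr fun w _ => ?_
    simp only [Set.InjOn, mem_coe, weight]
    exact forall₂_congr fun _ _ => forall₂_congr fun _ _ => not_imp_not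
  have hbad : #(Ω.filter fun w => ¬ Set.InjOn (weight w) F) * M ≤ F.card.choose 2 * #Ω :=
    card_filter_not_injOn_mul_le Ω F weight fun S₁ _ S₂ _ hne => by
      simpa only [Nat.card_Icc, Nat.add_sub_cancel] using
        card_filter_sum_eq_sum_mul_le (Icc 1 M) hne
  have hsplit := card_filter_add_card_filter_not (s := Ω) fun w => Set.InjOn (weight w) F
  have hΩ : 0 < #Ω :=
    card_pos.mpr (Fintype.piFinset_nonempty.mpr fun _ => nonempty_Icc.mpr (by omega))
  rw [hgood, div_lt_div_iff₀ two_pos (by exact_mod_cast hΩ)]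
  norm_cast
  nlinarith
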